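/- If Φ is a bounded inductive definition, then the smallest Φ-closed class I(Φ) is a set: there exists a set S such that for every set x, x ∈ S if and only if x belongs to I(Φ). -/

import Mathlib

/-!
The smallest `Φ`-closed class is the union of the stages `I^α`, where `I^α` collects every `x`
with `Φ X x` for some `X ⊆ I^β`, `β < α`. Condition (a) makes each stage a set. Condition (b)
bounds the size of every premise `X` by the cardinality of `⋃₀ B`; for a regular cardinal `κ`
above it, a premise contained in `I^κ` already lies in an earlier stage, so `I^κ` is `Φ`-closed
and therefore equals `I(Φ)`.
-/

/-- A class `I` (of ZF-sets) is closed under the inductive definition `Φ`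
(a binary class relation on sets): whenever `Φ X x` holds and `X ⊆ I`,
then `x ∈ I`. -/
def ClosedUnder (Φ : ZFSet → ZFSet → Prop) (I : ZFSet → Prop) : Prop :=
  ∀ X x : ZFSet, Φ X x → (∀ y ∈ X, I y) → I x

/-- The smallest `Φ`-closed class `I(Φ)`: the intersection of all `Φ`-closed
classes. -/
def IClass (Φ : ZFSet → ZFSet → Prop) (x : ZFSet) : Prop :=
  ∀ J : ZFSet → Prop, ClosedUnder Φ J → J x

/-- `f` is a (set-)function from `Y` onto `X`: a functional set of ordered pairs
with domain `Y`, all of whose values lie in `X`, and every element of `X` is a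
value. -/
def IsFunOnto (f Y X : ZFSet) : Prop :=
  (∀ w ∈ f, ∃ u v : ZFSet, w = ZFSet.pair u v) ∧
  (∀ u v : ZFSet, ZFSet.pair u v ∈ f → u ∈ Y ∧ v ∈ X) ∧
  (∀ u ∈ Y, ∃ v : ZFSet, ZFSet.pair u v ∈ f) ∧
  (∀ u v w : ZFSet, ZFSet.pair u v ∈ f → ZFSet.pair u w ∈ f → v = w) ∧
  (∀ v ∈ X, ∃ u : ZFSet, ZFSet.pair u v ∈ f)

/-- The inductive definition `Φ` is bounded: (a) for every set `X` the class
`{x : Φ X x}` is a set; (b) there is a set `B` (a bound) such that whenever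
`Φ X x` holds, `X` is an image of some `Y ∈ B`. -/
def BoundedID (Φ : ZFSet → ZFSet → Prop) : Prop :=
  (∀ X : ZFSet, ∃ s : ZFSet, ∀ x : ZFSet, x ∈ s ↔ Φ X x) ∧
  (∃ B : ZFSet, ∀ X x : ZFSet, Φ X x →
    ∃ Y : ZFSet, Y ∈ B ∧ ∃ f : ZFSet, IsFunOnto f Y X)

universe u

open Cardinal Order

namespace ZFSet

theorem exists_coe_eq_of_small (s : Set ZFSet.{u}) [hs : Small.{u} s] :
    ∃ x : ZFSet.{u}, (x : Set ZFSet) = s :=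
  ⟨coeEquiv.symm ⟨s, hs⟩, congrArg Subtype.val (coeEquiv.apply_symm_apply ⟨s, hs⟩)⟩

end ZFSet

theorem IsFunOnto.card_le {f Y X : ZFSet.{u}} (hf : IsFunOnto f Y X) : X.card ≤ Y.card := by
  obtain ⟨-, hdom, -, hfun, hsurj⟩ := hf
  choose g hg using hsurj
  let ι : X → Y := fun v => ⟨g v v.2, (hdom _ _ (hg v v.2)).1⟩
  have hι : Function.Injective ι := fun v w hvw => by
    have hgvw : g v v.2 = g w w.2 := congrArg Subtype.val hvw
    exact Subtype.ext (hfun _ _ _ (hg v v.2) (hgvw ▸ hg w w.2))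
  rw [← lift_le.{u + 1}, ← ZFSet.cardinalMk_coe_sort, ← ZFSet.cardinalMk_coe_sort]
  exact mk_le_of_injective hι

namespace BoundedID

variable {Φ : ZFSet.{u} → ZFSet.{u} → Prop}

theorem small_setOf (h : BoundedID Φ) (X : ZFSet.{u}) : Small.{u} {x | Φ X x} := by
  obtain ⟨s, hs⟩ := h.1 X
  have : (s : Set ZFSet) = {x | Φ X x} := Set.ext hs
  exact this ▸ ZFSet.small_coe s

theorem exists_isRegular_card_lt (h : BoundedID Φ) :
    ∃ κ : Cardinal.{u}, κ.IsRegular ∧ ∀ X x, Φ X x → X.card < κ := by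
  obtain ⟨B, hB⟩ := h.2
  refine ⟨succ (max (ZFSet.sUnion B).card ℵ₀), isRegular_succ (le_max_right _ _),
    fun X x hΦ => ?_⟩
  obtain ⟨Y, hYB, f, hf⟩ := hB X x hΦ
  calc X.card ≤ Y.card := hf.card_le
    _ ≤ (ZFSet.sUnion B).card := ZFSet.card_mono fun _ hy => ZFSet.mem_sUnion.2 ⟨Y, hYB, hy⟩
    _ ≤ max (ZFSet.sUnion B).card ℵ₀ := le_max_left _ _
    _ < succ (max (ZFSet.sUnion B).card ℵ₀) := lt_succ _

end BoundedID

namespace InductiveDefinition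

variable (Φ : ZFSet.{u} → ZFSet.{u} → Prop)

def step (C : Set ZFSet.{u}) : Set ZFSet.{u} :=
  {x | ∃ X : ZFSet.{u}, (X : Set ZFSet) ⊆ C ∧ Φ X x}

noncomputable def stage (α : Ordinal.{u}) : Set ZFSet.{u} :=
  ⋃ β : Set.Iio α, step Φ (stage β)
termination_by α
decreasing_by exact β.2

variable {Φ}

theorem mem_stage {α : Ordinal.{u}} {x : ZFSet.{u}} :
    x ∈ stage Φ α ↔ ∃ β < α, x ∈ step Φ (stage Φ β) := by
  rw [stage]
  simp only [Set.mem_iUnion, Subtype.exists, Set.mem_Iio, exists_prop]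

theorem step_stage_subset {β α : Ordinal.{u}} (h : β < α) :
    step Φ (stage Φ β) ⊆ stage Φ α :=
  fun _ hx => mem_stage.2 ⟨β, h, hx⟩

theorem stage_subset_iClass (α : Ordinal.{u}) : stage Φ α ⊆ {x | IClass Φ x} := by
  induction α using WellFoundedLT.induction with
  | _ α ih =>
    intro x hx J hJ
    obtain ⟨β, hβ, X, hX, hΦ⟩ := mem_stage.1 hx
    exact hJ X x hΦ fun y hy => ih β hβ (hX hy) J hJ

theorem small_step (hΦ : ∀ X, Small.{u} {x | Φ X x}) (C : Set ZFSet.{u}) [Small.{u} C] :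
    Small.{u} (step Φ C) := by
  obtain ⟨s, rfl⟩ := ZFSet.exists_coe_eq_of_small C
  have : step Φ s = ⋃ X ∈ (s.powerset : Set ZFSet), {x | Φ X x} := by
    ext x
    simp [step]
  rw [this]
  have : Small.{u} (s.powerset : Set ZFSet) := ZFSet.small_coe _
  infer_instance

theorem small_stage (hΦ : ∀ X, Small.{u} {x | Φ X x}) (α : Ordinal.{u}) :
    Small.{u} (stage Φ α) := by
  induction α using WellFoundedLT.induction with
  | _ α ih =>
    have : ∀ β : Set.Iio α, Small.{u} (step Φ (stage Φ β)) := fun β =>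
      have := ih β β.2
      small_step hΦ _
    rw [stage]
    infer_instance

theorem exists_lt_ord_subset_stage {κ : Cardinal.{u}} (hκ : κ.IsRegular) {X : ZFSet.{u}}
    (hcard : X.card < κ) (hX : (X : Set ZFSet) ⊆ stage Φ κ.ord) :
    ∃ α < κ.ord, (X : Set ZFSet) ⊆ stage Φ α := by
  have hβ : ∀ i : Shrink X, ∃ β < κ.ord, ((equivShrink X).symm i : ZFSet) ∈ step Φ (stage Φ β) :=
    fun i => mem_stage.1 (hX ((equivShrink X).symm i).2)
  choose β hβκ hβ using hβ
  have hsup : (⨆ i, β i) < κ.ord := Ordinal.iSup_lt_of_lt_cof (by rwa [hκ.cof_ord]) hβκ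
  refine ⟨succ (⨆ i, β i), (isSuccLimit_ord hκ.aleph0_le).succ_lt hsup, fun y hy => ?_⟩
  have hy' := hβ (equivShrink X ⟨y, hy⟩)
  rw [Equiv.symm_apply_apply] at hy'
  exact step_stage_subset ((Ordinal.le_iSup β _).trans_lt (lt_succ _)) hy'

theorem closedUnder_stage_ord {κ : Cardinal.{u}} (hκ : κ.IsRegular)
    (hcard : ∀ X x, Φ X x → X.card < κ) : ClosedUnder Φ (· ∈ stage Φ κ.ord) := by
  intro X x hΦ hX
  obtain ⟨α, hα, hXα⟩ := exists_lt_ord_subset_stage hκ (hcard X x hΦ) hX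
  exact step_stage_subset hα ⟨X, hXα, hΦ⟩

end InductiveDefinition

open InductiveDefinition in
/-- If `Φ` is a bounded inductive definition, then the smallest `Φ`-closed class
`I(Φ)` is a set: there is a set `S` whose elements are exactly the members of
`I(Φ)`. -/
theorem bounded_IClass_isSet (Φ : ZFSet → ZFSet → Prop) (h : BoundedID Φ) :
    ∃ S : ZFSet, ∀ x : ZFSet, x ∈ S ↔ IClass Φ x := by
  obtain ⟨κ, hκ, hcard⟩ := h.exists_isRegular_card_lt
  have := small_stage h.small_setOf κ.ord
  obtain ⟨S, hS⟩ := ZFSet.exists_coe_eq_of_small (stage Φ κ.ord)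
  have hmem : ∀ x, x ∈ S ↔ x ∈ stage Φ κ.ord := fun x => by rw [← hS, SetLike.mem_coe]
  refine ⟨S, fun x => ⟨fun hx => stage_subset_iClass _ ((hmem x).1 hx), fun hx => ?_⟩⟩
  exact (hmem x).2 (hx _ (closedUnder_stage_ord hκ hcard))
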